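/- arXiv:0903.2955 — 2 statements merged into one kernel-verified Lean document; each statement's English description precedes it below -/
import Mathlib

section
/- Let χ be a Dirichlet character of conductor d and T_k(χ,n) = Σ_{ℓ=0}^{n} χ(ℓ) ℓ^k. Then for all positive integers w₁, w₂ and every ℓ ≥ 0: Σ_{i=0}^{ℓ} (ℓ choose i) B_{i,χ} T_{ℓ-i}(χ, d w₁ − 1) w₁^{i-1} w₂^{ℓ-i} = Σ_{i=0}^{ℓ} (ℓ choose i) B_{i,χ} T_{ℓ-i}(χ, d w₂ − 1) w₂^{i-1} w₁^{ℓ-i}. -/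
/-!
Write `F(t) = ∑ B_{n,χ} tⁿ/n!` (`genBernoulliSeries χ`) and `S_N(c) = ∑_{n<N} χ(n) e^{nct}`
(`charExpSum χ N c`), the exponential generating function of `k ↦ T_k(χ, N - 1) cᵏ`. The
left-hand side is `ℓ!` times the `tˡ`-coefficient of `w₁⁻¹ F(w₁t) S_{dw₁}(w₂)`. The closed
formula for `B_{n,χ}` and the generating function of the Bernoulli polynomials give
`F(t)(e^{dt} - 1) = t S_d(1)`, and periodicity of `χ` gives
`S_{dw₁}(w₂)(e^{dw₂t} - 1) = S_d(w₂)(e^{dw₁w₂t} - 1)`. So, multiplied by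
`(e^{dw₁t} - 1)(e^{dw₂t} - 1)`, that series becomes `t S_d(w₁) S_d(w₂)(e^{dw₁w₂t} - 1)`, which is
symmetric in `w₁, w₂`; the factor can be cancelled since `ℂ⟦t⟧` is a domain.
-/
open Finset

/-- Generalized Bernoulli polynomial attached to a Dirichlet character, via the
standard closed formula `B_{n,χ}(x) = d^{n-1} ∑_{a<d} χ(a) B_n((a+x)/d)` which is
equivalent to the generating function definition
`∑_{a<d} χ(a) t e^{at} e^{xt}/(e^{dt}-1) = ∑ B_{n,χ}(x) tⁿ/n!`. -/
noncomputable def genBernoulliPoly {d : ℕ} (χ : DirichletCharacter ℂ d) (n : ℕ) (x : ℂ) : ℂ :=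
  (d : ℂ) ^ ((n : ℤ) - 1) *
    ∑ a ∈ Finset.range d, χ (a : ZMod d) * Polynomial.aeval (((a : ℂ) + x) / d) (Polynomial.bernoulli n)

/-- Generalized Bernoulli number `B_{n,χ} = B_{n,χ}(0)`. -/
noncomputable def genBernoulli {d : ℕ} (χ : DirichletCharacter ℂ d) (n : ℕ) : ℂ :=
  genBernoulliPoly χ n 0
/-- Character power sum `T_k(χ, n) = ∑_{ℓ=0}^{n} χ(ℓ) ℓ^k`. -/
noncomputable def charPowSum {d : ℕ} (χ : DirichletCharacter ℂ d) (k n : ℕ) : ℂ :=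
  ∑ ℓ ∈ Finset.range (n + 1), χ (ℓ : ZMod d) * (ℓ : ℂ) ^ k

open PowerSeries

section

variable {d : ℕ} (χ : DirichletCharacter ℂ d)

noncomputable def genBernoulliSeries : PowerSeries ℂ :=
  mk fun n => genBernoulli χ n / n.factorial

noncomputable def charExpSum (N : ℕ) (c : ℂ) : PowerSeries ℂ :=
  ∑ n ∈ range N, χ (n : ZMod d) • rescale (n * c) (exp ℂ)

lemma coeff_rescale_exp (a : ℂ) (k : ℕ) : coeff k (rescale a (exp ℂ)) = a ^ k / k.factorial := by
  simp [coeff_rescale, coeff_exp, div_eq_mul_inv]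

lemma rescale_exp_sub_one_ne_zero {a : ℂ} (ha : a ≠ 0) : rescale a (exp ℂ) - 1 ≠ 0 := by
  intro h
  simpa [coeff_rescale_exp, ha] using congrArg (coeff 1) h

lemma rescale_exp_pow (a : ℂ) (k : ℕ) : rescale a (exp ℂ) ^ k = rescale (k * a) (exp ℂ) := by
  rw [← map_pow, exp_pow_eq_rescale_exp, rescale_rescale]

lemma coeff_charExpSum (N k : ℕ) (c : ℂ) :
    coeff k (charExpSum χ (N + 1) c) = charPowSum χ k N * c ^ k / k.factorial := by
  simp only [charExpSum, charPowSum, map_sum, coeff_smul, coeff_rescale_exp, sum_mul, sum_div]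
  exact sum_congr rfl fun n _ => by ring

lemma rescale_charExpSum (N : ℕ) (a c : ℂ) :
    rescale a (charExpSum χ N c) = charExpSum χ N (c * a) := by
  ext k
  simp only [charExpSum, coeff_rescale, map_sum, coeff_smul]
  exact sum_congr rfl fun n _ => by ring

lemma charExpSum_mul_eq_charExpSum_mul_geom_sum (w : ℕ) (c : ℂ) :
    charExpSum χ (d * w) c = charExpSum χ d c * ∑ q ∈ range w, rescale (d * c) (exp ℂ) ^ q := by
  induction w with
  | zero => simp [charExpSum]
  | succ w ih =>
    unfold charExpSum at *
    rw [Nat.mul_succ, sum_range_add, ih, sum_range_succ, mul_add]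
    congr 1
    rw [sum_mul]
    refine sum_congr rfl fun b _ => ?_
    have hχ : χ ((d * w + b : ℕ) : ZMod d) = χ b := by simp
    rw [rescale_exp_pow, smul_mul_assoc, exp_mul_exp_eq_exp_add, hχ]
    congr 3
    push_cast
    ring

lemma charExpSum_mul_rescale_exp_sub_one (w : ℕ) (c : ℂ) :
    charExpSum χ (d * w) c * (rescale (d * c) (exp ℂ) - 1)
      = charExpSum χ d c * (rescale (d * w * c) (exp ℂ) - 1) := by
  rw [charExpSum_mul_eq_charExpSum_mul_geom_sum, mul_assoc, geom_sum_mul, rescale_exp_pow,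
    mul_left_comm, mul_assoc]

lemma genBernoulliSeries_mul_rescale_exp_sub_one (hd : d ≠ 0) :
    genBernoulliSeries χ * (rescale (d : ℂ) (exp ℂ) - 1) = X * charExpSum χ d 1 := by
  have hdC : (d : ℂ) ≠ 0 := Nat.cast_ne_zero.mpr hd
  have hB : genBernoulliSeries χ = ∑ a ∈ range d, (χ a / d) • rescale (d : ℂ) (mk fun n =>
      Polynomial.aeval ((a : ℂ) / d) ((1 / n.factorial : ℚ) • Polynomial.bernoulli n)) := by
    ext n
    simp only [genBernoulliSeries, genBernoulli, genBernoulliPoly, coeff_mk, map_sum,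
      coeff_rescale, zpow_sub₀ hdC, zpow_natCast, zpow_one, add_zero, mul_sum, sum_div, map_smul]
    refine sum_congr rfl fun a _ => ?_
    rw [Rat.smul_def, smul_eq_mul]
    push_cast
    ring
  rw [hB, sum_mul, charExpSum, mul_sum]
  refine sum_congr rfl fun a _ => ?_
  rw [smul_mul_assoc, ← map_one (rescale (d : ℂ)), ← map_sub, ← map_mul,
    Polynomial.bernoulli_generating_function, map_mul, rescale_X, rescale_rescale]
  have hd_inv : C (d : ℂ)⁻¹ * C (d : ℂ) = 1 := by rw [← map_mul, inv_mul_cancel₀ hdC, map_one]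
  rw [div_mul_cancel₀ _ hdC, mul_one, smul_eq_C_mul, smul_eq_C_mul, div_eq_mul_inv, map_mul]
  linear_combination (C (χ a) * X * rescale (a : ℂ) (exp ℂ)) * hd_inv

lemma rescale_genBernoulliSeries_mul_rescale_exp_sub_one (hd : d ≠ 0) (a : ℂ) :
    rescale a (genBernoulliSeries χ) * (rescale (d * a) (exp ℂ) - 1)
      = C a * X * charExpSum χ d a := by
  rw [← rescale_rescale, ← map_one (rescale a), ← map_sub, ← map_mul,
    genBernoulliSeries_mul_rescale_exp_sub_one χ hd, map_mul, rescale_X, rescale_charExpSum,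
    one_mul]

lemma sum_choose_genBernoulli_charPowSum_eq_coeff {a : ℂ} (ha : a ≠ 0) (c : ℂ) (N ℓ : ℕ) :
    ∑ i ∈ range (ℓ + 1), (ℓ.choose i : ℂ) * genBernoulli χ i * charPowSum χ (ℓ - i) N *
        a ^ ((i : ℤ) - 1) * c ^ (ℓ - i)
      = ℓ.factorial *
          coeff ℓ (a⁻¹ • (rescale a (genBernoulliSeries χ) * charExpSum χ (N + 1) c)) := by
  rw [coeff_smul, coeff_mul, Nat.sum_antidiagonal_eq_sum_range_succ
    (fun i j => coeff i (rescale a (genBernoulliSeries χ)) * coeff j (charExpSum χ (N + 1) c)),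
    smul_eq_mul, mul_sum, mul_sum]
  refine sum_congr rfl fun i hi => ?_
  have hi : i ≤ ℓ := Nat.lt_succ_iff.mp (mem_range.mp hi)
  rw [coeff_rescale, genBernoulliSeries, coeff_mk, coeff_charExpSum, zpow_sub₀ ha, zpow_one,
    zpow_natCast, Nat.cast_choose ℂ hi]
  field_simp

lemma inv_smul_rescale_genBernoulliSeries_mul_charExpSum_mul (hd : d ≠ 0) {w : ℕ} (hw : w ≠ 0)
    (c : ℂ) :
    (w : ℂ)⁻¹ • (rescale (w : ℂ) (genBernoulliSeries χ) * charExpSum χ (d * w) c)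
        * ((rescale (d * w : ℂ) (exp ℂ) - 1) * (rescale (d * c) (exp ℂ) - 1))
      = X * charExpSum χ d w * charExpSum χ d c * (rescale (d * w * c) (exp ℂ) - 1) := by
  have hwC : (w : ℂ) ≠ 0 := Nat.cast_ne_zero.mpr hw
  have hw_inv : C (w : ℂ)⁻¹ * C (w : ℂ) = 1 := by rw [← map_mul, inv_mul_cancel₀ hwC, map_one]
  calc
    _ = C (w : ℂ)⁻¹ * (rescale (w : ℂ) (genBernoulliSeries χ) * (rescale (d * w : ℂ) (exp ℂ) - 1))
          * (charExpSum χ (d * w) c * (rescale (d * c) (exp ℂ) - 1)) := by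
      rw [smul_eq_C_mul]
      ring
    _ = C (w : ℂ)⁻¹ * (C (w : ℂ) * X * charExpSum χ d w)
          * (charExpSum χ d c * (rescale (d * w * c) (exp ℂ) - 1)) := by
      rw [rescale_genBernoulliSeries_mul_rescale_exp_sub_one χ hd,
        charExpSum_mul_rescale_exp_sub_one]
    _ = X * charExpSum χ d w * charExpSum χ d c * (rescale (d * w * c) (exp ℂ) - 1) := by
      linear_combination (X * charExpSum χ d w * charExpSum χ d c *
        (rescale (d * w * c) (exp ℂ) - 1)) * hw_inv

lemma inv_smul_rescale_genBernoulliSeries_mul_charExpSum_comm (hd : d ≠ 0) {w₁ w₂ : ℕ}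
    (h₁ : w₁ ≠ 0) (h₂ : w₂ ≠ 0) :
    (w₁ : ℂ)⁻¹ • (rescale (w₁ : ℂ) (genBernoulliSeries χ) * charExpSum χ (d * w₁) w₂)
      = (w₂ : ℂ)⁻¹ • (rescale (w₂ : ℂ) (genBernoulliSeries χ) * charExpSum χ (d * w₂) w₁) := by
  have hne : ∀ w : ℕ, w ≠ 0 → rescale (d * w : ℂ) (exp ℂ) - 1 ≠ 0 := fun w hw =>
    rescale_exp_sub_one_ne_zero (mul_ne_zero (Nat.cast_ne_zero.mpr hd) (Nat.cast_ne_zero.mpr hw))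
  refine mul_right_cancel₀ (mul_ne_zero (hne w₁ h₁) (hne w₂ h₂)) ?_
  rw [inv_smul_rescale_genBernoulliSeries_mul_charExpSum_mul χ hd h₁,
    mul_comm (rescale (d * w₁ : ℂ) (exp ℂ) - 1),
    inv_smul_rescale_genBernoulliSeries_mul_charExpSum_mul χ hd h₂, mul_right_comm (d : ℂ) (w₂ : ℂ)]
  ring

end

theorem stmt4 {d : ℕ} (hd : 0 < d) (χ : DirichletCharacter ℂ d)
    (w₁ w₂ : ℕ) (hw₁ : 0 < w₁) (hw₂ : 0 < w₂) (ℓ : ℕ) :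
    ∑ i ∈ Finset.range (ℓ + 1), (ℓ.choose i : ℂ) * genBernoulli χ i *
        charPowSum χ (ℓ - i) (d * w₁ - 1) * (w₁ : ℂ) ^ ((i : ℤ) - 1) * (w₂ : ℂ) ^ (ℓ - i) =
      ∑ i ∈ Finset.range (ℓ + 1), (ℓ.choose i : ℂ) * genBernoulli χ i *
        charPowSum χ (ℓ - i) (d * w₂ - 1) * (w₂ : ℂ) ^ ((i : ℤ) - 1) * (w₁ : ℂ) ^ (ℓ - i) := by
  have hN : ∀ w, 0 < w → d * w - 1 + 1 = d * w := fun w hw => Nat.sub_add_cancel (Nat.mul_pos hd hw)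
  rw [sum_choose_genBernoulli_charPowSum_eq_coeff χ (Nat.cast_ne_zero.mpr hw₁.ne'),
    sum_choose_genBernoulli_charPowSum_eq_coeff χ (Nat.cast_ne_zero.mpr hw₂.ne'), hN w₁ hw₁,
    hN w₂ hw₂, inv_smul_rescale_genBernoulliSeries_mul_charExpSum_comm χ hd.ne' hw₁.ne' hw₂.ne']
end

section
/- Let χ be a Dirichlet character of conductor d. For all positive integers w₁, w₂ and k ≥ 0: w₁^{k-1} Σ_{i=0}^{d w₁ − 1} χ(i) B_{k,χ}((w₂/w₁) i) = w₂^{k-1} Σ_{i=0}^{d w₂ − 1} χ(i) B_{k,χ}((w₁/w₂) i). -/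
/-!
Raabe's multiplication theorem `B_k(m z) = m^(k-1) ∑_{l<m} B_k(z + l/m)`, read off from the
generating function `t e^(zt) / (e^t - 1)`, shows that the closed formula for `B_{k,χ}` may be
computed with any multiple `d m` of the period `d` in place of `d`. Taking the period `d w₂` on
the left and `d w₁` on the right, both sides become
`(d w₁ w₂)^(k-1) ∑_{i < d w₁} ∑_{j < d w₂} χ(i) χ(j) B_k((w₂ i + w₁ j) / (d w₁ w₂))`,
which is symmetric under `(w₁, i) ↔ (w₂, j)`.
-/

open Finset

theorem Finset.sum_range_mul_eq_sum_sum {M : Type*} [AddCommMonoid M] (f : ℕ → M) (n m : ℕ) :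
    ∑ i ∈ range (n * m), f i = ∑ a ∈ range n, ∑ j ∈ range m, f (a + n * j) := by
  rw [mul_comm, sum_range, ← finProdFinEquiv.sum_comp, Fintype.sum_prod_type, sum_comm]
  simp [sum_range, finProdFinEquiv]

open Polynomial PowerSeries

section Raabe

variable {K : Type*} [Field K] [CharZero K]

noncomputable def bernoulliEGF (t : K) : K⟦X⟧ :=
  PowerSeries.mk fun n => aeval t ((1 / (n.factorial : ℚ)) • Polynomial.bernoulli n)

theorem coeff_bernoulliEGF (t : K) (n : ℕ) :
    PowerSeries.coeff n (bernoulliEGF t) =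
      (n.factorial : K)⁻¹ * aeval t (Polynomial.bernoulli n) := by
  simp [bernoulliEGF, Algebra.smul_def]

theorem bernoulliEGF_mul_exp_sub_one (t : K) :
    bernoulliEGF t * (exp K - 1) = PowerSeries.X * rescale t (exp K) :=
  bernoulli_generating_function t

theorem exp_pow_sub_one_ne_zero {m : ℕ} (hm : m ≠ 0) : exp K ^ m - 1 ≠ 0 := by
  intro h
  simpa [exp_pow_eq_rescale_exp, coeff_rescale, coeff_exp, hm] using
    congrArg (PowerSeries.coeff 1) h

theorem rescale_sum_bernoulliEGF {m : ℕ} (hm : m ≠ 0) (z : K) :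
    rescale (m : K) (∑ l ∈ range m, bernoulliEGF (z + l / m)) =
      (m : K) • bernoulliEGF (m * z) := by
  refine mul_right_cancel₀ (exp_pow_sub_one_ne_zero (K := K) hm) ?_
  calc rescale (m : K) (∑ l ∈ range m, bernoulliEGF (z + l / m)) * (exp K ^ m - 1)
      = rescale (m : K) (∑ l ∈ range m, PowerSeries.X * rescale (z + l / m) (exp K)) := by
        rw [exp_pow_eq_rescale_exp, ← map_one (rescale (m : K)), ← map_sub, ← map_mul, sum_mul]
        simp only [bernoulliEGF_mul_exp_sub_one]
    _ = PowerSeries.C (m : K) * (PowerSeries.X * rescale (m * z) (exp K)) *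
          ∑ l ∈ range m, exp K ^ l := by
        rw [map_sum, mul_sum]
        refine sum_congr rfl fun l _ => ?_
        have hm' : (m : K) ≠ 0 := Nat.cast_ne_zero.2 hm
        rw [map_mul, rescale_X, rescale_rescale, exp_pow_eq_rescale_exp]
        simp only [mul_assoc, exp_mul_exp_eq_exp_add]
        congr 3
        field_simp
    _ = (m : K) • bernoulliEGF (m * z) * (exp K ^ m - 1) := by
        rw [← bernoulliEGF_mul_exp_sub_one, ← geom_sum_mul, PowerSeries.smul_eq_C_mul]
        ring

theorem bernoulli_aeval_mul {m : ℕ} (hm : m ≠ 0) (k : ℕ) (z : K) :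
    aeval (m * z) (Polynomial.bernoulli k) =
      (m : K) ^ ((k : ℤ) - 1) * ∑ l ∈ range m, aeval (z + l / m) (Polynomial.bernoulli k) := by
  have hm' : (m : K) ≠ 0 := Nat.cast_ne_zero.2 hm
  have hk : (k.factorial : K)⁻¹ ≠ 0 := by simp [Nat.factorial_ne_zero]
  have h := congrArg (PowerSeries.coeff k) (rescale_sum_bernoulliEGF hm z)
  simp only [coeff_rescale, map_sum, PowerSeries.coeff_smul, coeff_bernoulliEGF, ← mul_sum,
    smul_eq_mul] at h
  rw [zpow_sub_one₀ hm', zpow_natCast, mul_comm _ (m : K)⁻¹, mul_assoc,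
    eq_inv_mul_iff_mul_eq₀ hm']
  exact mul_left_cancel₀ hk (by linear_combination h.symm)

theorem bernoulli_aeval_div_eq_sum {d m : ℕ} (hd : d ≠ 0) (hm : m ≠ 0) (k : ℕ) (y : K) :
    aeval (y / d) (Polynomial.bernoulli k) =
      (m : K) ^ ((k : ℤ) - 1) *
        ∑ l ∈ range m, aeval ((y + d * l) / (d * m)) (Polynomial.bernoulli k) := by
  have hd' : (d : K) ≠ 0 := Nat.cast_ne_zero.2 hd
  have hm' : (m : K) ≠ 0 := Nat.cast_ne_zero.2 hm
  rw [show y / d = m * (y / (d * m)) by field_simp, bernoulli_aeval_mul hm]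
  congr 2 with l
  field_simp

end Raabe

theorem genBernoulliPoly_eq_sum_range_mul {d : ℕ} (χ : DirichletCharacter ℂ d) (k : ℕ) {m : ℕ}
    (hm : m ≠ 0) (x : ℂ) :
    genBernoulliPoly χ k x = ((d : ℂ) * m) ^ ((k : ℤ) - 1) *
      ∑ i ∈ range (d * m), χ (i : ZMod d) * aeval (((i : ℂ) + x) / (d * m)) (bernoulli k) := by
  have hterm : ∀ a ∈ range d, χ (a : ZMod d) * aeval (((a : ℂ) + x) / d) (bernoulli k) =
      (m : ℂ) ^ ((k : ℤ) - 1) * ∑ l ∈ range m, χ ((a + d * l : ℕ) : ZMod d) *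
        aeval ((((a + d * l : ℕ) : ℂ) + x) / (d * m)) (bernoulli k) := by
    intro a ha
    rw [bernoulli_aeval_div_eq_sum (ne_zero_of_lt (mem_range.1 ha)) hm, mul_left_comm, mul_sum]
    congr 1
    refine sum_congr rfl fun l _ => ?_
    simp only [Nat.cast_add, Nat.cast_mul, ZMod.natCast_self, zero_mul, add_zero]
    ring_nf
  rw [genBernoulliPoly, sum_congr rfl hterm, ← mul_sum, ← mul_assoc, ← mul_zpow,
    sum_range_mul_eq_sum_sum]

theorem zpow_mul_sum_genBernoulliPoly_eq_double_sum {d : ℕ} (χ : DirichletCharacter ℂ d)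
    (k : ℕ) {w₁ w₂ : ℕ} (hw₁ : w₁ ≠ 0) (hw₂ : w₂ ≠ 0) :
    (w₁ : ℂ) ^ ((k : ℤ) - 1) * ∑ i ∈ range (d * w₁),
        χ (i : ZMod d) * genBernoulliPoly χ k ((w₂ : ℂ) / w₁ * i) =
      ((d : ℂ) * w₁ * w₂) ^ ((k : ℤ) - 1) * ∑ i ∈ range (d * w₁), ∑ j ∈ range (d * w₂),
        χ (i : ZMod d) * χ (j : ZMod d) *
          aeval (((w₂ : ℂ) * i + w₁ * j) / (d * w₁ * w₂)) (bernoulli k) := by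
  have hw₁' : (w₁ : ℂ) ≠ 0 := Nat.cast_ne_zero.2 hw₁
  have hc : ((d : ℂ) * w₁ * w₂) ^ ((k : ℤ) - 1) =
      w₁ ^ ((k : ℤ) - 1) * (d * w₂) ^ ((k : ℤ) - 1) := by
    rw [← mul_zpow, mul_left_comm, mul_assoc]
  rw [hc, mul_assoc]
  congr 1
  rw [mul_sum]
  refine sum_congr rfl fun i _ => ?_
  rw [genBernoulliPoly_eq_sum_range_mul χ k hw₂, mul_left_comm, mul_sum]
  congr 1
  refine sum_congr rfl fun j _ => ?_
  rw [show ((j : ℂ) + w₂ / w₁ * i) / (d * w₂) = (w₂ * i + w₁ * j) / (d * w₁ * w₂) by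
    field_simp; ring]
  exact (mul_assoc _ _ _).symm

theorem stmt6_general {d : ℕ} (χ : DirichletCharacter ℂ d)
    (w₁ w₂ : ℕ) (hw₁ : 0 < w₁) (hw₂ : 0 < w₂) (k : ℕ) :
    (w₁ : ℂ) ^ ((k : ℤ) - 1) * ∑ i ∈ Finset.range (d * w₁),
        χ (i : ZMod d) * genBernoulliPoly χ k ((w₂ : ℂ) / w₁ * i) =
      (w₂ : ℂ) ^ ((k : ℤ) - 1) * ∑ i ∈ Finset.range (d * w₂),
        χ (i : ZMod d) * genBernoulliPoly χ k ((w₁ : ℂ) / w₂ * i) := by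
  rw [zpow_mul_sum_genBernoulliPoly_eq_double_sum χ k hw₁.ne' hw₂.ne',
    zpow_mul_sum_genBernoulliPoly_eq_double_sum χ k hw₂.ne' hw₁.ne', sum_comm,
    mul_right_comm (d : ℂ) (w₂ : ℂ)]
  congr 1
  refine sum_congr rfl fun i _ => sum_congr rfl fun j _ => ?_
  rw [mul_comm (χ _), add_comm]

theorem stmt6 {d : ℕ} (hd : 0 < d) (χ : DirichletCharacter ℂ d)
    (w₁ w₂ : ℕ) (hw₁ : 0 < w₁) (hw₂ : 0 < w₂) (k : ℕ) :
    (w₁ : ℂ) ^ ((k : ℤ) - 1) * ∑ i ∈ Finset.range (d * w₁),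
        χ (i : ZMod d) * genBernoulliPoly χ k ((w₂ : ℂ) / w₁ * i) =
      (w₂ : ℂ) ^ ((k : ℤ) - 1) * ∑ i ∈ Finset.range (d * w₂),
        χ (i : ZMod d) * genBernoulliPoly χ k ((w₁ : ℂ) / w₂ * i) :=
  stmt6_general χ w₁ w₂ hw₁ hw₂ k
end
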